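/- Let H be a real Hilbert space, C ⊆ H a nonempty convex subset, T, U : C → C nonexpansive maps with a common fixed point p, u, x₀ ∈ C, and (α_n) ⊂ [0,1], (β_n) ⊂ (0,1). Let (x_n) be the alternating Halpern–Mann iteration with anchor u and starting point x₀, and let N ∈ ℕ, N ≥ 1, satisfy N ≥ max{‖x₀ − p‖, ‖u − p‖}. Assume Γ1 is a rate of convergence for α_n → 0, Γ2 : ℕ → ℕ satisfies ∑_{i=0}^{Γ2(k)} α_i ≥ k for all k, Γ3 is a Cauchy rate for ∑|α_{n+1} − α_n|, Γ4 is a Cauchy rate for ∑|β_{n+1} − β_n|, γ ∈ (0, 1/2] satisfies γ ≤ β_n ≤ 1 − γ for all n, the functions Γ1, Γ3, Γ4 are antitone (ε ≤ ε' implies Γ_i(ε) ≥ Γ_i(ε')), and Γ2 is monotone. Define θ1(ε) := A(V(ε/2) + ⌈ln(4N/ε)⌉ + 1) + 1 with A(k) := Γ2(k+1) and V(ε) := max{ Γ3(ε/(4N)), Γ4(ε/(4N)) }; θ3(ε) := max{ θ1((γε)²/(8N)), Γ1((γε)²/(2N²)) }; θ4(ε) := max{ θ1(ε/2), θ3(ε/2)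 }; ρ1(ε) := max{ 2θ3(ε) + 1, 2θ4(ε) }; ρ2(ε) := 2θ3(ε/3) + 2; ρ3(ε) := 2·max{ θ4(ε/6), Γ1(ε/(4N)) } + 1. Then for all ε > 0: ‖x_{n+1} − x_n‖ ≤ ε for all n ≥ ρ1(ε); ‖U(x_n) − x_n‖ ≤ ε for all n ≥ ρ2(ε); and ‖T(x_n) − x_n‖ ≤ ε for all n ≥ ρ3(ε). -/

import Mathlib

/-!
All iterates stay in `C ∩ closedBall p N`, so the even differences
`d m = ‖x (2m+2) - x (2m)‖` obey the Xu-type recursion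
`d (m+1) ≤ (1 - α (m+1)) d m + 2N (|α (m+1) - α m| + |β (m+1) - β m|)`. Since
`∏ (1 - α i) ≤ exp (-∑ α i)`, the rate of divergence `Γ2` and the Cauchy rates `Γ3`, `Γ4` turn it
into the rate `θ1` for the odd differences `‖x (2m+3) - x (2m+1)‖`. In a Hilbert space the Mann
step `z = (1 - β) U y + β y` satisfies `β (1 - β) ‖U y - y‖² ≤ ‖y - p‖² - ‖z - p‖²`, while the
next Halpern step moves the distance to `p` by at most the odd difference plus `O(α)`; this gives
the rate `θ3` for `‖U x (2m+1) - x (2m+1)‖`. The remaining residuals follow from the triangle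
inequality and nonexpansiveness.
-/

/-- `V(ε) := max{Γ3(ε/(4N)), Γ4(ε/(4N))}`. -/
noncomputable def Vrate (Γ3 Γ4 : ℝ → ℕ) (N : ℕ) (ε : ℝ) : ℕ :=
  max (Γ3 (ε / (4 * (N : ℝ)))) (Γ4 (ε / (4 * (N : ℝ))))

/-- `θ1(ε) := A(V(ε/2) + ⌈ln(4N/ε)⌉ + 1) + 1`, where `A(k) := Γ2(k+1)`. -/
noncomputable def theta1 (Γ2 : ℕ → ℕ) (Γ3 Γ4 : ℝ → ℕ) (N : ℕ) (ε : ℝ) : ℕ :=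
  Γ2 (Vrate Γ3 Γ4 N (ε / 2) + ⌈Real.log (4 * (N : ℝ) / ε)⌉₊ + 1 + 1) + 1

/-- `θ3(ε) := max{θ1((γε)²/(8N)), Γ1((γε)²/(2N²))}`. -/
noncomputable def theta3 (Γ1 : ℝ → ℕ) (Γ2 : ℕ → ℕ) (Γ3 Γ4 : ℝ → ℕ) (N : ℕ) (γ : ℝ)
    (ε : ℝ) : ℕ :=
  max (theta1 Γ2 Γ3 Γ4 N ((γ * ε) ^ 2 / (8 * (N : ℝ))))
    (Γ1 ((γ * ε) ^ 2 / (2 * (N : ℝ) ^ 2)))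

/-- `θ4(ε) := max{θ1(ε/2), θ3(ε/2)}`. -/
noncomputable def theta4 (Γ1 : ℝ → ℕ) (Γ2 : ℕ → ℕ) (Γ3 Γ4 : ℝ → ℕ) (N : ℕ) (γ : ℝ)
    (ε : ℝ) : ℕ :=
  max (theta1 Γ2 Γ3 Γ4 N (ε / 2)) (theta3 Γ1 Γ2 Γ3 Γ4 N γ (ε / 2))

/-- `ρ1(ε) := max{2θ3(ε) + 1, 2θ4(ε)}`. -/
noncomputable def rho1 (Γ1 : ℝ → ℕ) (Γ2 : ℕ → ℕ) (Γ3 Γ4 : ℝ → ℕ) (N : ℕ) (γ : ℝ)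
    (ε : ℝ) : ℕ :=
  max (2 * theta3 Γ1 Γ2 Γ3 Γ4 N γ ε + 1) (2 * theta4 Γ1 Γ2 Γ3 Γ4 N γ ε)

/-- `ρ2(ε) := 2θ3(ε/3) + 2`. -/
noncomputable def rho2 (Γ1 : ℝ → ℕ) (Γ2 : ℕ → ℕ) (Γ3 Γ4 : ℝ → ℕ) (N : ℕ) (γ : ℝ)
    (ε : ℝ) : ℕ :=
  2 * theta3 Γ1 Γ2 Γ3 Γ4 N γ (ε / 3) + 2

/-- `ρ3(ε) := 2·max{θ4(ε/6), Γ1(ε/(4N))} + 1`. -/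
noncomputable def rho3 (Γ1 : ℝ → ℕ) (Γ2 : ℕ → ℕ) (Γ3 Γ4 : ℝ → ℕ) (N : ℕ) (γ : ℝ)
    (ε : ℝ) : ℕ :=
  2 * max (theta4 Γ1 Γ2 Γ3 Γ4 N γ (ε / 6)) (Γ1 (ε / (4 * (N : ℝ)))) + 1

open Finset Set Metric

def IsCauchyRate (f : ℕ → ℝ) (Γ : ℝ → ℕ) : Prop :=
  ∀ ε : ℝ, 0 < ε → ∀ n : ℕ, ∑ i ∈ Finset.Icc (Γ ε + 1) (Γ ε + n), f i ≤ ε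

theorem IsCauchyRate.sum_Icc_le {f : ℕ → ℝ} {Γ : ℝ → ℕ} (hΓ : IsCauchyRate f Γ)
    (hf : ∀ i, 0 ≤ f i) {ε : ℝ} (hε : 0 < ε) {lo hi : ℕ} (hlo : Γ ε < lo) :
    ∑ i ∈ Finset.Icc lo hi, f i ≤ ε :=
  (sum_le_sum_of_subset_of_nonneg (Finset.Icc_subset_Icc hlo (by omega : hi ≤ Γ ε + (hi - Γ ε)))
    fun i _ _ => hf i).trans (hΓ ε hε _)

theorem le_prod_mul_add_sum_of_le_one_sub_mul_add {a c d : ℕ → ℝ} (ha0 : ∀ i, 0 ≤ a i)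
    (ha1 : ∀ i, a i ≤ 1) (hc : ∀ m, 0 ≤ c m) (h : ∀ m, d (m + 1) ≤ (1 - a (m + 1)) * d m + c m)
    {b n : ℕ} (hbn : b ≤ n) :
    d n ≤ (∏ i ∈ Ioc b n, (1 - a i)) * d b + ∑ m ∈ Ico b n, c m := by
  induction n, hbn using Nat.le_induction with
  | base => simp
  | succ n hbn ih =>
    have hsum : 0 ≤ ∑ m ∈ Ico b n, c m := sum_nonneg fun m _ => hc m
    rw [prod_Ioc_succ_top hbn, sum_Ico_succ_top hbn]
    calc d (n + 1) ≤ (1 - a (n + 1)) * d n + c n := h n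
      _ ≤ (1 - a (n + 1)) * ((∏ i ∈ Ioc b n, (1 - a i)) * d b + ∑ m ∈ Ico b n, c m) + c n := by
        gcongr; linarith [ha1 (n + 1)]
      _ ≤ _ := by nlinarith [ha0 (n + 1)]

theorem prod_one_sub_le_exp_neg_sum {ι : Type*} (s : Finset ι) {a : ι → ℝ}
    (ha : ∀ i ∈ s, a i ≤ 1) : ∏ i ∈ s, (1 - a i) ≤ Real.exp (-∑ i ∈ s, a i) := by
  rw [← sum_neg_distrib, Real.exp_sum]
  exact prod_le_prod (fun i hi => by linarith [ha i hi])
    fun i _ => by linarith [Real.add_one_le_exp (-a i)]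

theorem le_sum_Ico_of_le_sum_range {a : ℕ → ℝ} (ha0 : ∀ i, 0 ≤ a i) (ha1 : ∀ i, a i ≤ 1)
    {L K n m : ℕ} (h : ((L + K : ℕ) : ℝ) ≤ ∑ i ∈ range n, a i) (hnm : n ≤ m) :
    L ≤ m ∧ (K : ℝ) ≤ ∑ i ∈ Ico L m, a i := by
  have hcard : ∀ k, ∑ i ∈ range k, a i ≤ k := fun k => by
    simpa using sum_le_card_nsmul (range k) a 1 fun i _ => ha1 i
  have hmono : ∑ i ∈ range n, a i ≤ ∑ i ∈ range m, a i :=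
    sum_le_sum_of_subset_of_nonneg (range_subset_range.2 hnm) fun i _ _ => ha0 i
  have hLm : L ≤ m := by
    have : ((L + K : ℕ) : ℝ) ≤ m := h.trans (hmono.trans (hcard m))
    exact_mod_cast (Nat.le_add_right L K).trans (by exact_mod_cast this)
  rw [← sum_range_add_sum_Ico a hLm] at hmono
  push_cast at h
  exact ⟨hLm, by linarith [hcard L]⟩

theorem le_of_theta1_le {a b d e : ℕ → ℝ} {N : ℕ} {Γ2 : ℕ → ℕ} {Γ3 Γ4 : ℝ → ℕ} (hN : 1 ≤ N)
    (ha : ∀ n, a n ∈ Set.Icc (0 : ℝ) 1) (hd0 : ∀ m, 0 ≤ d m) (hdN : ∀ m, d m ≤ 2 * N)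
    (hed : ∀ m, e m ≤ (1 - a (m + 1)) * d m + 2 * N * |a (m + 1) - a m|)
    (hde : ∀ m, d (m + 1) ≤ e m + 2 * N * |b (m + 1) - b m|)
    (hΓ2 : ∀ k : ℕ, (k : ℝ) ≤ ∑ i ∈ range (Γ2 k + 1), a i)
    (hΓ3 : IsCauchyRate (fun i => |a (i + 1) - a i|) Γ3)
    (hΓ4 : IsCauchyRate (fun i => |b (i + 1) - b i|) Γ4)
    {ε : ℝ} (hε : 0 < ε) {j : ℕ} (hj : theta1 Γ2 Γ3 Γ4 N ε ≤ j + 1) : e j ≤ ε := by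
  set V := Vrate Γ3 Γ4 N (ε / 2)
  set K := ⌈Real.log (4 * (N : ℝ) / ε)⌉₊
  set c : ℕ → ℝ := fun m => 2 * N * (|a (m + 1) - a m| + |b (m + 1) - b m|)
  have hN0 : (0 : ℝ) < N := by exact_mod_cast hN
  have ha0 : ∀ i, 0 ≤ a i := fun i => (ha i).1
  have ha1 : ∀ i, a i ≤ 1 := fun i => (ha i).2
  obtain ⟨hVj, hK⟩ := le_sum_Ico_of_le_sum_range (L := V + 1 + 1) (K := K) ha0 ha1
    ((le_of_eq (by push_cast; ring)).trans (hΓ2 (V + K + 1 + 1))) (by unfold theta1 at hj; omega)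
  rw [Finset.Ico_add_one_add_one_eq_Ioc] at hK
  have hprod : ∏ i ∈ Ioc (V + 1) j, (1 - a i) ≤ ε / (4 * N) := calc
    _ ≤ Real.exp (-∑ i ∈ Ioc (V + 1) j, a i) := prod_one_sub_le_exp_neg_sum _ fun i _ => ha1 i
    _ ≤ Real.exp (-Real.log (4 * N / ε)) := by gcongr; exact (Nat.le_ceil _).trans hK
    _ = ε / (4 * N) := by rw [Real.exp_neg, Real.exp_log (by positivity), inv_div]
  have hxu := le_prod_mul_add_sum_of_le_one_sub_mul_add ha0 ha1 (c := c) (d := d)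
    (fun m => by positivity)
    (fun m => (hde m).trans (by nlinarith [hed m, abs_nonneg (b (m + 1) - b m)]))
    (by omega : V + 1 ≤ j)
  have hcj : e j ≤ d j + c j :=
    (hed j).trans (by nlinarith [hd0 j, ha0 (j + 1), abs_nonneg (b (j + 1) - b j)])
  have htail : ∑ m ∈ Icc (V + 1) j, c m ≤ ε / 2 := by
    have hΓ3V : Γ3 (ε / 2 / (4 * N)) < V + 1 := Nat.lt_succ_of_le (le_max_left _ _)
    have hΓ4V : Γ4 (ε / 2 / (4 * N)) < V + 1 := Nat.lt_succ_of_le (le_max_right _ _)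
    have h3 := hΓ3.sum_Icc_le (fun _ => abs_nonneg _) (by positivity) (hi := j) hΓ3V
    have h4 := hΓ4.sum_Icc_le (fun _ => abs_nonneg _) (by positivity) (hi := j) hΓ4V
    simp only [c, ← mul_sum, sum_add_distrib]
    calc _ ≤ 2 * (N : ℝ) * (ε / 2 / (4 * N) + ε / 2 / (4 * N)) := by gcongr
      _ = ε / 2 := by field_simp; ring
  rw [← Finset.Ico_add_one_right_eq_Icc, sum_Ico_succ_top (by omega)] at htail
  have hprod' : (∏ i ∈ Ioc (V + 1) j, (1 - a i)) * d (V + 1) ≤ ε / 2 := calc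
    _ ≤ ε / (4 * N) * (2 * N) :=
      mul_le_mul hprod (hdN _) (hd0 _) (by positivity)
    _ = ε / 2 := by field_simp; ring
  calc e j ≤ d j + c j := hcj
    _ ≤ (∏ i ∈ Ioc (V + 1) j, (1 - a i)) * d (V + 1) + (∑ m ∈ Ico (V + 1) j, c m + c j) := by
      linarith
    _ ≤ ε / 2 + ε / 2 := add_le_add hprod' htail
    _ = ε := add_halves ε

theorem norm_sub_le_two_mul {E : Type*} [SeminormedAddCommGroup E] {a b p : E} {N : ℝ}
    (ha : ‖a - p‖ ≤ N) (hb : ‖b - p‖ ≤ N) : ‖a - b‖ ≤ 2 * N := by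
  linarith [norm_sub_le_norm_sub_add_norm_sub a p b, norm_sub_rev b p]

section NormedSpace

variable {E : Type*} [NormedAddCommGroup E] [NormedSpace ℝ E]

theorem norm_combo_sub_le (v w q : E) {t : ℝ} (ht0 : 0 ≤ t) (ht1 : t ≤ 1) :
    ‖(1 - t) • v + t • w - q‖ ≤ (1 - t) * ‖v - q‖ + t * ‖w - q‖ := by
  rw [show (1 - t) • v + t • w - q = (1 - t) • (v - q) + t • (w - q) by module]
  refine (norm_add_le _ _).trans_eq ?_
  rw [norm_smul, norm_smul, Real.norm_of_nonneg (sub_nonneg.2 ht1), Real.norm_of_nonneg ht0]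

theorem norm_combo_sub_combo_le (v v' w w' : E) {t t' : ℝ} (ht0 : 0 ≤ t') (ht1 : t' ≤ 1) :
    ‖(1 - t') • v' + t' • w' - ((1 - t) • v + t • w)‖ ≤
      (1 - t') * ‖v' - v‖ + t' * ‖w' - w‖ + |t' - t| * ‖v - w‖ := by
  rw [show (1 - t') • v' + t' • w' - ((1 - t) • v + t • w) =
      (1 - t') • (v' - v) + t' • (w' - w) + (t - t') • (v - w) by module]
  refine norm_add₃_le.trans_eq ?_
  rw [norm_smul, norm_smul, norm_smul, Real.norm_of_nonneg (sub_nonneg.2 ht1),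
    Real.norm_of_nonneg ht0, Real.norm_eq_abs, abs_sub_comm]

theorem norm_combo_sub_left (v w : E) (t : ℝ) : ‖(1 - t) • v + t • w - v‖ = |t| * ‖w - v‖ := by
  rw [show (1 - t) • v + t • w - v = t • (w - v) by module, norm_smul, Real.norm_eq_abs]

theorem norm_combo_sub_right (v w : E) (t : ℝ) :
    ‖(1 - t) • v + t • w - w‖ = |1 - t| * ‖v - w‖ := by
  rw [show (1 - t) • v + t • w - w = (1 - t) • (v - w) by module, norm_smul, Real.norm_eq_abs]

theorem norm_sub_combo_le {U : E → E} {y : E} {t : ℝ} (ht0 : 0 ≤ t) (ht1 : t ≤ 1)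
    (hU : ‖U ((1 - t) • U y + t • y) - U y‖ ≤ ‖(1 - t) • U y + t • y - y‖) :
    ‖U ((1 - t) • U y + t • y) - ((1 - t) • U y + t • y)‖ ≤ ‖U y - y‖ := by
  set z := (1 - t) • U y + t • y
  have hzy : ‖z - y‖ = (1 - t) * ‖U y - y‖ := by
    rw [norm_combo_sub_right, abs_of_nonneg (sub_nonneg.2 ht1)]
  have hzU : ‖z - U y‖ = t * ‖U y - y‖ := by
    rw [norm_combo_sub_left, abs_of_nonneg ht0, norm_sub_rev]
  calc ‖U z - z‖ ≤ ‖U z - U y‖ + ‖U y - z‖ := norm_sub_le_norm_sub_add_norm_sub _ _ _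
    _ ≤ ‖z - y‖ + ‖z - U y‖ := by rw [norm_sub_rev (U y)]; gcongr
    _ = ‖U y - y‖ := by rw [hzy, hzU]; ring

end NormedSpace

structure IsAltHalpernMann {E : Type*} [NormedAddCommGroup E] [Module ℝ E] (C : Set E)
    (T U : E → E) (p u : E) (α β : ℕ → ℝ) (x : ℕ → E) : Prop where
  convex : Convex ℝ C
  mapsTo_T : MapsTo T C C
  mapsTo_U : MapsTo U C C
  nonexpansive_T : ∀ y ∈ C, ∀ z ∈ C, ‖T y - T z‖ ≤ ‖y - z‖
  nonexpansive_U : ∀ y ∈ C, ∀ z ∈ C, ‖U y - U z‖ ≤ ‖y - z‖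
  fixed_mem : p ∈ C
  T_fixed : T p = p
  U_fixed : U p = p
  anchor_mem : u ∈ C
  start_mem : x 0 ∈ C
  α_mem : ∀ n, α n ∈ Set.Icc (0 : ℝ) 1
  β_mem : ∀ n, β n ∈ Set.Icc (0 : ℝ) 1
  odd : ∀ n, x (2 * n + 1) = (1 - α n) • T (x (2 * n)) + α n • u
  even : ∀ n, x (2 * n + 2) = (1 - β n) • U (x (2 * n + 1)) + β n • x (2 * n + 1)

namespace IsAltHalpernMann

section NormedSpace

variable {E : Type*} [NormedAddCommGroup E] [NormedSpace ℝ E] {C : Set E} {T U : E → E}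
  {p u : E} {α β : ℕ → ℝ} {x : ℕ → E}

theorem forall_mem (h : IsAltHalpernMann C T U p u α β x) {K : Set E} (hK : Convex ℝ K)
    (hTK : MapsTo T K K) (hUK : MapsTo U K K) (huK : u ∈ K) (hx0K : x 0 ∈ K) (n : ℕ) :
    x n ∈ K := by
  have hcombo : ∀ {t : ℝ} {v w : E}, t ∈ Set.Icc (0 : ℝ) 1 → v ∈ K → w ∈ K →
      (1 - t) • v + t • w ∈ K := fun ht hv hw => hK hv hw (by linarith [ht.2]) ht.1 (by ring)
  have hstep : ∀ m, x (2 * m) ∈ K → x (2 * m + 1) ∈ K := fun m hm => by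
    rw [h.odd]; exact hcombo (h.α_mem m) (hTK hm) huK
  have heven : ∀ m, x (2 * m) ∈ K := by
    intro m
    induction m with
    | zero => exact hx0K
    | succ m ih =>
      have hodd := hstep m ih
      rw [show 2 * (m + 1) = 2 * m + 2 by ring, h.even]
      exact hcombo (h.β_mem m) (hUK hodd) hodd
  obtain ⟨m, rfl | rfl⟩ := Nat.even_or_odd' n
  exacts [heven m, hstep m (heven m)]

theorem mem (h : IsAltHalpernMann C T U p u α β x) (n : ℕ) : x n ∈ C :=
  h.forall_mem h.convex h.mapsTo_T h.mapsTo_U h.anchor_mem h.start_mem n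

theorem norm_T_sub_le (h : IsAltHalpernMann C T U p u α β x) {y : E} (hy : y ∈ C) :
    ‖T y - p‖ ≤ ‖y - p‖ := by
  simpa only [h.T_fixed] using h.nonexpansive_T y hy p h.fixed_mem

theorem norm_U_sub_le (h : IsAltHalpernMann C T U p u α β x) {y : E} (hy : y ∈ C) :
    ‖U y - p‖ ≤ ‖y - p‖ := by
  simpa only [h.U_fixed] using h.nonexpansive_U y hy p h.fixed_mem

theorem norm_sub_le (h : IsAltHalpernMann C T U p u α β x) {N : ℝ} (hx0 : ‖x 0 - p‖ ≤ N)
    (hu : ‖u - p‖ ≤ N) (n : ℕ) : ‖x n - p‖ ≤ N := by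
  have hball : ∀ {V : E → E}, MapsTo V C C → (∀ {y}, y ∈ C → ‖V y - p‖ ≤ ‖y - p‖) →
      MapsTo V (C ∩ closedBall p N) (C ∩ closedBall p N) := fun hV hVp y hy =>
    ⟨hV hy.1, mem_closedBall_iff_norm.2 ((hVp hy.1).trans (mem_closedBall_iff_norm.1 hy.2))⟩
  have := h.forall_mem (h.convex.inter (convex_closedBall p N))
    (hball h.mapsTo_T h.norm_T_sub_le) (hball h.mapsTo_U h.norm_U_sub_le)
    ⟨h.anchor_mem, mem_closedBall_iff_norm.2 hu⟩ ⟨h.start_mem, mem_closedBall_iff_norm.2 hx0⟩ n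
  exact mem_closedBall_iff_norm.1 this.2

theorem norm_odd_sub_le (h : IsAltHalpernMann C T U p u α β x) {N : ℝ}
    (hxN : ∀ n, ‖x n - p‖ ≤ N) (huN : ‖u - p‖ ≤ N) (m : ℕ) :
    ‖x (2 * m + 3) - x (2 * m + 1)‖ ≤
      (1 - α (m + 1)) * ‖x (2 * m + 2) - x (2 * m)‖ + 2 * N * |α (m + 1) - α m| := by
  have hT := h.nonexpansive_T _ (h.mem (2 * m + 2)) _ (h.mem (2 * m))
  have huT : ‖T (x (2 * m)) - u‖ ≤ 2 * N :=
    norm_sub_le_two_mul ((h.norm_T_sub_le (h.mem _)).trans (hxN _)) huN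
  have hα := h.α_mem (m + 1)
  rw [show 2 * m + 3 = 2 * (m + 1) + 1 by ring, h.odd, h.odd, show 2 * (m + 1) = 2 * m + 2 by ring]
  refine (norm_combo_sub_combo_le _ _ _ _ hα.1 hα.2).trans ?_
  rw [sub_self, norm_zero, mul_zero, add_zero, mul_comm (2 * N)]
  gcongr
  linarith [hα.2]

theorem norm_even_sub_le (h : IsAltHalpernMann C T U p u α β x) {N : ℝ}
    (hxN : ∀ n, ‖x n - p‖ ≤ N) (m : ℕ) :
    ‖x (2 * m + 4) - x (2 * m + 2)‖ ≤
      ‖x (2 * m + 3) - x (2 * m + 1)‖ + 2 * N * |β (m + 1) - β m| := by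
  have hU := h.nonexpansive_U _ (h.mem (2 * m + 3)) _ (h.mem (2 * m + 1))
  have hUx : ‖U (x (2 * m + 1)) - x (2 * m + 1)‖ ≤ 2 * N :=
    norm_sub_le_two_mul ((h.norm_U_sub_le (h.mem _)).trans (hxN _)) (hxN _)
  have hβ := h.β_mem (m + 1)
  rw [show 2 * m + 4 = 2 * (m + 1) + 2 by ring, h.even, h.even,
    show 2 * (m + 1) + 1 = 2 * m + 3 by ring]
  refine (norm_combo_sub_combo_le _ _ _ _ hβ.1 hβ.2).trans ?_
  nlinarith [mul_le_mul_of_nonneg_left hU (sub_nonneg.2 hβ.2),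
    mul_le_mul_of_nonneg_left hUx (abs_nonneg (β (m + 1) - β m))]

theorem norm_even_sub_odd_le (h : IsAltHalpernMann C T U p u α β x) (m : ℕ) :
    ‖x (2 * m + 2) - x (2 * m + 1)‖ ≤ ‖U (x (2 * m + 1)) - x (2 * m + 1)‖ := by
  have hβ := h.β_mem m
  rw [h.even, norm_combo_sub_right, abs_of_nonneg (by linarith [hβ.2])]
  exact mul_le_of_le_one_left (norm_nonneg _) (by linarith [hβ.1])

theorem norm_U_sub_self_le (h : IsAltHalpernMann C T U p u α β x) {m n : ℕ}
    (hn : n = 2 * m + 1 ∨ n = 2 * m + 2) :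
    ‖U (x n) - x n‖ ≤ ‖U (x (2 * m + 1)) - x (2 * m + 1)‖ := by
  rcases hn with rfl | rfl
  · exact le_rfl
  · have hβ := h.β_mem m
    have hU := h.nonexpansive_U _ (h.mem (2 * m + 2)) _ (h.mem (2 * m + 1))
    rw [h.even] at hU ⊢
    exact norm_sub_combo_le hβ.1 hβ.2 hU

theorem norm_T_sub_self_le (h : IsAltHalpernMann C T U p u α β x) {N : ℝ}
    (hxN : ∀ n, ‖x n - p‖ ≤ N) (huN : ‖u - p‖ ≤ N) {m n : ℕ}
    (hn : n = 2 * m ∨ n = 2 * m + 1) :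
    ‖T (x n) - x n‖ ≤ ‖x (2 * m + 1) - x (2 * m)‖ + 2 * N * α m := by
  have hTx : ‖T (x (2 * m)) - x (2 * m + 1)‖ ≤ 2 * N * α m := by
    have huT : ‖u - T (x (2 * m))‖ ≤ 2 * N :=
      norm_sub_le_two_mul huN ((h.norm_T_sub_le (h.mem _)).trans (hxN _))
    rw [h.odd, norm_sub_rev, norm_combo_sub_left, abs_of_nonneg (h.α_mem m).1]
    nlinarith [(h.α_mem m).1]
  rcases hn with rfl | rfl
  · linarith [norm_sub_le_norm_sub_add_norm_sub (T (x (2 * m))) (x (2 * m + 1)) (x (2 * m))]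
  · have hT := h.nonexpansive_T _ (h.mem (2 * m + 1)) _ (h.mem (2 * m))
    linarith [norm_sub_le_norm_sub_add_norm_sub (T (x (2 * m + 1))) (T (x (2 * m)))
      (x (2 * m + 1))]

theorem norm_odd_sub_le_of_theta1_le (h : IsAltHalpernMann C T U p u α β x) {N : ℕ}
    (hN : 1 ≤ N) (hxN : ∀ n, ‖x n - p‖ ≤ N) (huN : ‖u - p‖ ≤ N) {Γ2 : ℕ → ℕ} {Γ3 Γ4 : ℝ → ℕ}
    (hΓ2 : ∀ k : ℕ, (k : ℝ) ≤ ∑ i ∈ range (Γ2 k + 1), α i)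
    (hΓ3 : IsCauchyRate (fun i => |α (i + 1) - α i|) Γ3)
    (hΓ4 : IsCauchyRate (fun i => |β (i + 1) - β i|) Γ4) {ε : ℝ} (hε : 0 < ε) {j : ℕ}
    (hj : theta1 Γ2 Γ3 Γ4 N ε ≤ j + 1) : ‖x (2 * j + 3) - x (2 * j + 1)‖ ≤ ε :=
  le_of_theta1_le (d := fun m => ‖x (2 * m + 2) - x (2 * m)‖) hN h.α_mem (fun _ => norm_nonneg _)
    (fun _ => norm_sub_le_two_mul (hxN _) (hxN _)) (h.norm_odd_sub_le hxN huN)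
    (h.norm_even_sub_le hxN) hΓ2 hΓ3 hΓ4 hε hj

end NormedSpace

end IsAltHalpernMann

theorem sq_sub_sq_le_of_le_add {a b c s t N : ℝ} (ha : 0 ≤ a) (hc : 0 ≤ c) (hs : 0 ≤ s)
    (haN : a ≤ N) (hcN : c ≤ N) (ht0 : 0 ≤ t) (ht1 : t ≤ 1) (hac : a ≤ s + c)
    (hcb : c ≤ (1 - t) * b + t * N) : a ^ 2 - b ^ 2 ≤ 2 * N * s + t * N ^ 2 := by
  have hac2 : a ^ 2 - c ^ 2 ≤ 2 * N * s := by
    nlinarith [mul_le_mul_of_nonneg_right (sub_le_iff_le_add.2 hac) (add_nonneg ha hc)]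
  -- convexity of the square: `((1 - t) b + t N)² ≤ (1 - t) b² + t N²`
  have hcb2 : c ^ 2 - b ^ 2 ≤ t * N ^ 2 := by
    nlinarith [mul_le_mul hcb hcb hc (hc.trans hcb), mul_nonneg (mul_nonneg ht0 (sub_nonneg.2 ht1))
      (sq_nonneg (b - N)), mul_nonneg ht0 (sq_nonneg b)]
  linarith

section InnerProductSpace

variable {F : Type*} [NormedAddCommGroup F] [InnerProductSpace ℝ F]

theorem norm_combo_sq_add (v w : F) (t : ℝ) :
    ‖(1 - t) • v + t • w‖ ^ 2 + t * (1 - t) * ‖v - w‖ ^ 2 = (1 - t) * ‖v‖ ^ 2 + t * ‖w‖ ^ 2 := by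
  rw [norm_add_sq_real, norm_sub_sq_real, norm_smul, norm_smul, real_inner_smul_left,
    real_inner_smul_right, Real.norm_eq_abs, Real.norm_eq_abs, mul_pow, mul_pow, sq_abs, sq_abs]
  ring

theorem mul_norm_sub_sq_le_sq_sub_sq {U : F → F} {y p : F} {t : ℝ} (ht1 : t ≤ 1)
    (hU : ‖U y - p‖ ≤ ‖y - p‖) :
    t * (1 - t) * ‖U y - y‖ ^ 2 ≤ ‖y - p‖ ^ 2 - ‖(1 - t) • U y + t • y - p‖ ^ 2 := by
  have hid := norm_combo_sq_add (U y - p) (y - p) t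
  rw [show (1 - t) • (U y - p) + t • (y - p) = (1 - t) • U y + t • y - p by module,
    sub_sub_sub_cancel_right] at hid
  nlinarith [mul_le_mul_of_nonneg_left (pow_le_pow_left₀ (norm_nonneg _) hU 2) (sub_nonneg.2 ht1)]

namespace IsAltHalpernMann

variable {C : Set F} {T U : F → F} {p u : F} {α β : ℕ → ℝ} {x : ℕ → F}

theorem mul_norm_U_sub_sq_le (h : IsAltHalpernMann C T U p u α β x) {N : ℝ}
    (hxN : ∀ n, ‖x n - p‖ ≤ N) (huN : ‖u - p‖ ≤ N) (m : ℕ) :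
    β m * (1 - β m) * ‖U (x (2 * m + 1)) - x (2 * m + 1)‖ ^ 2 ≤
      2 * N * ‖x (2 * m + 3) - x (2 * m + 1)‖ + α (m + 1) * N ^ 2 := by
  have hmann := mul_norm_sub_sq_le_sq_sub_sq (h.β_mem m).2 (h.norm_U_sub_le (h.mem (2 * m + 1)))
  rw [← h.even] at hmann
  have hα := h.α_mem (m + 1)
  have hcb : ‖x (2 * m + 3) - p‖ ≤ (1 - α (m + 1)) * ‖x (2 * m + 2) - p‖ + α (m + 1) * N := by
    rw [show 2 * m + 3 = 2 * (m + 1) + 1 by ring, h.odd, show 2 * (m + 1) = 2 * m + 2 by ring]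
    linarith [norm_combo_sub_le (T (x (2 * m + 2))) u p hα.1 hα.2,
      mul_le_mul_of_nonneg_left (h.norm_T_sub_le (h.mem (2 * m + 2))) (sub_nonneg.2 hα.2),
      mul_le_mul_of_nonneg_left huN hα.1]
  refine hmann.trans (sq_sub_sq_le_of_le_add (norm_nonneg _) (norm_nonneg _) (norm_nonneg _)
    (hxN _) (hxN _) hα.1 hα.2 ?_ hcb)
  linarith [norm_sub_le_norm_sub_add_norm_sub (x (2 * m + 1)) (x (2 * m + 3)) p,
    norm_sub_rev (x (2 * m + 1)) (x (2 * m + 3))]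

theorem norm_U_odd_sub_le_of_theta3_le (h : IsAltHalpernMann C T U p u α β x) {N : ℕ}
    (hN : 1 ≤ N) (hxN : ∀ n, ‖x n - p‖ ≤ N) (huN : ‖u - p‖ ≤ N) {Γ1 : ℝ → ℕ} {Γ2 : ℕ → ℕ}
    {Γ3 Γ4 : ℝ → ℕ} (hΓ1 : ∀ ε : ℝ, 0 < ε → ∀ n ≥ Γ1 ε, |α n| ≤ ε)
    (hΓ2 : ∀ k : ℕ, (k : ℝ) ≤ ∑ i ∈ range (Γ2 k + 1), α i)
    (hΓ3 : IsCauchyRate (fun i => |α (i + 1) - α i|) Γ3)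
    (hΓ4 : IsCauchyRate (fun i => |β (i + 1) - β i|) Γ4) {γ : ℝ} (hγ : 0 < γ)
    (hγβ : ∀ n, γ ≤ β n ∧ β n ≤ 1 - γ) {ε : ℝ} (hε : 0 < ε) {m : ℕ}
    (hm : theta3 Γ1 Γ2 Γ3 Γ4 N γ ε ≤ m + 1) : ‖U (x (2 * m + 1)) - x (2 * m + 1)‖ ≤ ε := by
  have hN0 : (0 : ℝ) < N := by exact_mod_cast hN
  have hS := h.norm_odd_sub_le_of_theta1_le hN hxN huN hΓ2 hΓ3 hΓ4 (by positivity)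
    (le_of_max_le_left hm)
  have hα := (le_abs_self _).trans (hΓ1 _ (by positivity) _ (le_of_max_le_right hm))
  have hγ2 : γ ^ 2 ≤ β m * (1 - β m) := by nlinarith [hγβ m]
  have hsq : γ ^ 2 * ‖U (x (2 * m + 1)) - x (2 * m + 1)‖ ^ 2 ≤ γ ^ 2 * ε ^ 2 := calc
    _ ≤ β m * (1 - β m) * ‖U (x (2 * m + 1)) - x (2 * m + 1)‖ ^ 2 := by gcongr
    _ ≤ 2 * N * ((γ * ε) ^ 2 / (8 * N)) + (γ * ε) ^ 2 / (2 * N ^ 2) * N ^ 2 :=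
      (h.mul_norm_U_sub_sq_le hxN huN m).trans (by gcongr)
    _ ≤ γ ^ 2 * ε ^ 2 := by field_simp; nlinarith [sq_nonneg (γ * ε)]
  exact (pow_le_pow_iff_left₀ (norm_nonneg _) hε.le two_ne_zero).1
    (le_of_mul_le_mul_left hsq (by positivity))

theorem norm_odd_sub_even_le_of_theta4_le (h : IsAltHalpernMann C T U p u α β x) {N : ℕ}
    (hN : 1 ≤ N) (hxN : ∀ n, ‖x n - p‖ ≤ N) (huN : ‖u - p‖ ≤ N) {Γ1 : ℝ → ℕ} {Γ2 : ℕ → ℕ}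
    {Γ3 Γ4 : ℝ → ℕ} (hΓ1 : ∀ ε : ℝ, 0 < ε → ∀ n ≥ Γ1 ε, |α n| ≤ ε)
    (hΓ2 : ∀ k : ℕ, (k : ℝ) ≤ ∑ i ∈ range (Γ2 k + 1), α i)
    (hΓ3 : IsCauchyRate (fun i => |α (i + 1) - α i|) Γ3)
    (hΓ4 : IsCauchyRate (fun i => |β (i + 1) - β i|) Γ4) {γ : ℝ} (hγ : 0 < γ)
    (hγβ : ∀ n, γ ≤ β n ∧ β n ≤ 1 - γ) {ε : ℝ} (hε : 0 < ε) {m : ℕ}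
    (hm : theta4 Γ1 Γ2 Γ3 Γ4 N γ ε ≤ m) : ‖x (2 * m + 1) - x (2 * m)‖ ≤ ε := by
  have h1 := le_of_max_le_left hm
  obtain ⟨j, rfl⟩ : ∃ j, m = j + 1 := Nat.exists_eq_add_one.2 (Nat.lt_of_lt_of_le (by
    unfold theta1; omega) h1)
  have hodd := h.norm_odd_sub_le_of_theta1_le hN hxN huN hΓ2 hΓ3 hΓ4 (half_pos hε) h1
  have hU := h.norm_U_odd_sub_le_of_theta3_le hN hxN huN hΓ1 hΓ2 hΓ3 hΓ4 hγ hγβ (half_pos hε)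
    (le_of_max_le_right hm)
  calc ‖x (2 * (j + 1) + 1) - x (2 * (j + 1))‖ = ‖x (2 * j + 3) - x (2 * j + 2)‖ := rfl
    _ ≤ ‖x (2 * j + 3) - x (2 * j + 1)‖ + ‖x (2 * j + 2) - x (2 * j + 1)‖ := by
      rw [norm_sub_rev (x (2 * j + 2))]; exact norm_sub_le_norm_sub_add_norm_sub _ _ _
    _ ≤ ε / 2 + ε / 2 := add_le_add hodd ((h.norm_even_sub_odd_le j).trans hU)
    _ = ε := add_halves ε

end IsAltHalpernMann

end InnerProductSpace

theorem stmt10_general {H : Type*} [NormedAddCommGroup H] [InnerProductSpace ℝ H]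
    (C : Set H) (hCconv : Convex ℝ C)
    (T U : H → H) (hTmaps : Set.MapsTo T C C) (hUmaps : Set.MapsTo U C C)
    (hTne : ∀ x ∈ C, ∀ y ∈ C, ‖T x - T y‖ ≤ ‖x - y‖)
    (hUne : ∀ x ∈ C, ∀ y ∈ C, ‖U x - U y‖ ≤ ‖x - y‖)
    (p : H) (hp : p ∈ C) (hTp : T p = p) (hUp : U p = p)
    (u x₀ : H) (hu : u ∈ C) (hx₀ : x₀ ∈ C)
    (α β : ℕ → ℝ)
    (hα : ∀ n, α n ∈ Set.Icc (0 : ℝ) 1) (hβ : ∀ n, β n ∈ Set.Ioo (0 : ℝ) 1)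
    (x : ℕ → H) (hx0 : x 0 = x₀)
    (hxodd : ∀ n, x (2 * n + 1) = (1 - α n) • T (x (2 * n)) + α n • u)
    (hxeven : ∀ n, x (2 * n + 2) = (1 - β n) • U (x (2 * n + 1)) + β n • x (2 * n + 1))
    (N : ℕ) (hN1 : 1 ≤ N)
    (hN : max ‖x₀ - p‖ ‖u - p‖ ≤ (N : ℝ))
    (Γ1 : ℝ → ℕ) (Γ2 : ℕ → ℕ) (Γ3 Γ4 : ℝ → ℕ)
    (hΓ1 : ∀ ε : ℝ, 0 < ε → ∀ n ≥ Γ1 ε, |α n| ≤ ε)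
    (hΓ2 : ∀ k : ℕ, (k : ℝ) ≤ ∑ i ∈ Finset.range (Γ2 k + 1), α i)
    (hΓ3 : ∀ ε : ℝ, 0 < ε → ∀ n : ℕ,
      ∑ i ∈ Finset.Icc (Γ3 ε + 1) (Γ3 ε + n), |α (i + 1) - α i| ≤ ε)
    (hΓ4 : ∀ ε : ℝ, 0 < ε → ∀ n : ℕ,
      ∑ i ∈ Finset.Icc (Γ4 ε + 1) (Γ4 ε + n), |β (i + 1) - β i| ≤ ε)
    (γ : ℝ) (hγ : γ ∈ Set.Ioc (0 : ℝ) (1 / 2))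
    (hγβ : ∀ n, γ ≤ β n ∧ β n ≤ 1 - γ) :
    ∀ ε : ℝ, 0 < ε →
      (∀ n ≥ rho1 Γ1 Γ2 Γ3 Γ4 N γ ε, ‖x (n + 1) - x n‖ ≤ ε) ∧
      (∀ n ≥ rho2 Γ1 Γ2 Γ3 Γ4 N γ ε, ‖U (x n) - x n‖ ≤ ε) ∧
      (∀ n ≥ rho3 Γ1 Γ2 Γ3 Γ4 N γ ε, ‖T (x n) - x n‖ ≤ ε) := by
  have h : IsAltHalpernMann C T U p u α β x := ⟨hCconv, hTmaps, hUmaps, hTne, hUne, hp, hTp, hUp,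
    hu, hx0 ▸ hx₀, hα, fun n => Set.Ioo_subset_Icc_self (hβ n), hxodd, hxeven⟩
  have huN : ‖u - p‖ ≤ N := (le_max_right _ _).trans hN
  have hxN := h.norm_sub_le (hx0 ▸ (le_max_left _ _).trans hN) huN
  have hU : ∀ ε > 0, ∀ m, theta3 Γ1 Γ2 Γ3 Γ4 N γ ε ≤ m + 1 →
      ‖U (x (2 * m + 1)) - x (2 * m + 1)‖ ≤ ε := fun ε hε m hm =>
    h.norm_U_odd_sub_le_of_theta3_le hN1 hxN huN hΓ1 hΓ2 hΓ3 hΓ4 hγ.1 hγβ hε hm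
  have hstep : ∀ ε > 0, ∀ m, theta4 Γ1 Γ2 Γ3 Γ4 N γ ε ≤ m →
      ‖x (2 * m + 1) - x (2 * m)‖ ≤ ε := fun ε hε m hm =>
    h.norm_odd_sub_even_le_of_theta4_le hN1 hxN huN hΓ1 hΓ2 hΓ3 hΓ4 hγ.1 hγβ hε hm
  intro ε hε
  refine ⟨fun n hn => ?_, fun n hn => ?_, fun n hn => ?_⟩
  · unfold rho1 at hn
    obtain ⟨m, rfl | rfl⟩ := Nat.even_or_odd' n
    · exact hstep ε hε m (by omega)
    · exact (h.norm_even_sub_odd_le m).trans (hU ε hε m (by omega))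
  · unfold rho2 at hn
    obtain ⟨m, hm⟩ := Nat.even_or_odd' (n - 1)
    refine (h.norm_U_sub_self_le (m := m) (by omega)).trans ?_
    linarith [hU (ε / 3) (by positivity) m (by omega)]
  · unfold rho3 at hn
    obtain ⟨m, hnm⟩ := Nat.even_or_odd' n
    have hαm : α m ≤ ε / (4 * N) := (le_abs_self _).trans (hΓ1 _ (by positivity) m (by omega))
    calc ‖T (x n) - x n‖ ≤ ‖x (2 * m + 1) - x (2 * m)‖ + 2 * N * α m :=
          h.norm_T_sub_self_le hxN huN hnm
      _ ≤ ε / 6 + 2 * N * (ε / (4 * N)) := by gcongr; exact hstep _ (by positivity) m (by omega)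
      _ ≤ ε := by field_simp; linarith

/-- Rates of asymptotic regularity `ρ1`, `ρ2`, `ρ3` for the alternating
Halpern–Mann iteration in a Hilbert space. -/
theorem stmt10 {H : Type*} [NormedAddCommGroup H] [InnerProductSpace ℝ H]
    (C : Set H) (hCne : C.Nonempty) (hCconv : Convex ℝ C)
    (T U : H → H) (hTmaps : Set.MapsTo T C C) (hUmaps : Set.MapsTo U C C)
    (hTne : ∀ x ∈ C, ∀ y ∈ C, ‖T x - T y‖ ≤ ‖x - y‖)
    (hUne : ∀ x ∈ C, ∀ y ∈ C, ‖U x - U y‖ ≤ ‖x - y‖)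
    (p : H) (hp : p ∈ C) (hTp : T p = p) (hUp : U p = p)
    (u x₀ : H) (hu : u ∈ C) (hx₀ : x₀ ∈ C)
    (α β : ℕ → ℝ)
    (hα : ∀ n, α n ∈ Set.Icc (0 : ℝ) 1) (hβ : ∀ n, β n ∈ Set.Ioo (0 : ℝ) 1)
    (x : ℕ → H) (hx0 : x 0 = x₀)
    (hxodd : ∀ n, x (2 * n + 1) = (1 - α n) • T (x (2 * n)) + α n • u)
    (hxeven : ∀ n, x (2 * n + 2) = (1 - β n) • U (x (2 * n + 1)) + β n • x (2 * n + 1))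
    (N : ℕ) (hN1 : 1 ≤ N)
    (hN : max ‖x₀ - p‖ ‖u - p‖ ≤ (N : ℝ))
    (Γ1 : ℝ → ℕ) (Γ2 : ℕ → ℕ) (Γ3 Γ4 : ℝ → ℕ)
    (hΓ1 : ∀ ε : ℝ, 0 < ε → ∀ n ≥ Γ1 ε, |α n| ≤ ε)
    (hΓ2 : ∀ k : ℕ, (k : ℝ) ≤ ∑ i ∈ Finset.range (Γ2 k + 1), α i)
    (hΓ3 : ∀ ε : ℝ, 0 < ε → ∀ n : ℕ,
      ∑ i ∈ Finset.Icc (Γ3 ε + 1) (Γ3 ε + n), |α (i + 1) - α i| ≤ ε)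
    (hΓ4 : ∀ ε : ℝ, 0 < ε → ∀ n : ℕ,
      ∑ i ∈ Finset.Icc (Γ4 ε + 1) (Γ4 ε + n), |β (i + 1) - β i| ≤ ε)
    (γ : ℝ) (hγ : γ ∈ Set.Ioc (0 : ℝ) (1 / 2))
    (hγβ : ∀ n, γ ≤ β n ∧ β n ≤ 1 - γ)
    (hΓ1anti : ∀ ε ε' : ℝ, 0 < ε → ε ≤ ε' → Γ1 ε' ≤ Γ1 ε)
    (hΓ3anti : ∀ ε ε' : ℝ, 0 < ε → ε ≤ ε' → Γ3 ε' ≤ Γ3 ε)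
    (hΓ4anti : ∀ ε ε' : ℝ, 0 < ε → ε ≤ ε' → Γ4 ε' ≤ Γ4 ε)
    (hΓ2mono : Monotone Γ2) :
    ∀ ε : ℝ, 0 < ε →
      (∀ n ≥ rho1 Γ1 Γ2 Γ3 Γ4 N γ ε, ‖x (n + 1) - x n‖ ≤ ε) ∧
      (∀ n ≥ rho2 Γ1 Γ2 Γ3 Γ4 N γ ε, ‖U (x n) - x n‖ ≤ ε) ∧
      (∀ n ≥ rho3 Γ1 Γ2 Γ3 Γ4 N γ ε, ‖T (x n) - x n‖ ≤ ε) :=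
  stmt10_general C hCconv T U hTmaps hUmaps hTne hUne p hp hTp hUp u x₀ hu hx₀ α β hα hβ x hx0 hxodd
    hxeven N hN1 hN Γ1 Γ2 Γ3 Γ4 hΓ1 hΓ2 hΓ3 hΓ4 γ hγ hγβ
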